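/- arXiv:2506.15782 — 6 statements merged into one kernel-verified Lean document; each statement's English description precedes it below -/
import Mathlib

section
/- Let H be an RKHS on a state space X with kernel 𝔎, and let F : X → X. If F is a bijection and 𝔎(F(x), F(y)) = 𝔎(x, y) for all x, y ∈ X, then the Koopman operator K_F g = g ∘ F extends to a unitary operator on H. Conversely, if K_F is unitary then 𝔎(F(x), F(y)) = 𝔎(x, y) for all x, y ∈ X. -/
/-!
Since `toFun` is injective, the kernel functions `K x` span a dense subspace. If `F` preserves
the kernel, the Gram matrices of `K` and `K ∘ F` coincide, so `K x ↦ K (F x)` extends to a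
linear isometry `V` of `H`; surjectivity of `F` puts every `K y` in its (closed) range, so `V` is
unitary. The reproducing property turns `toFun (U f) = toFun f ∘ F` into `U⁻¹ (K x) = K (F x)`,
so `U := V⁻¹` is the Koopman operator, and conversely a unitary Koopman operator preserves the
kernel.
-/

open Finsupp

section GramExtension

variable {𝕜 E E' ι : Type*} [RCLike 𝕜]
  [NormedAddCommGroup E] [InnerProductSpace 𝕜 E]
  [NormedAddCommGroup E'] [InnerProductSpace 𝕜 E']

theorem inner_linearCombination_eq_of_inner_eq {v : ι → E} {w : ι → E'}
    (hvw : ∀ i j, inner 𝕜 (w i) (w j) = inner 𝕜 (v i) (v j)) (l l' : ι →₀ 𝕜) :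
    inner 𝕜 (linearCombination 𝕜 w l) (linearCombination 𝕜 w l') =
      inner 𝕜 (linearCombination 𝕜 v l) (linearCombination 𝕜 v l') := by
  simp only [linearCombination_apply, Finsupp.sum_inner, Finsupp.inner_sum, inner_smul_left,
    inner_smul_right, hvw]

theorem exists_linearIsometry_apply_eq_of_inner_eq [CompleteSpace E'] {v : ι → E} {w : ι → E'}
    (hv : Dense (Submodule.span 𝕜 (Set.range v) : Set E))
    (hvw : ∀ i j, inner 𝕜 (w i) (w j) = inner 𝕜 (v i) (v j)) :
    ∃ T : E →ₗᵢ[𝕜] E', ∀ i, T (v i) = w i := by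
  have hnorm (l : ι →₀ 𝕜) : ‖linearCombination 𝕜 w l‖ = ‖linearCombination 𝕜 v l‖ := by
    simp only [@norm_eq_sqrt_re_inner 𝕜, inner_linearCombination_eq_of_inner_eq hvw]
  have hdense : DenseRange (linearCombination 𝕜 v) := by
    rwa [DenseRange, ← LinearMap.coe_range, range_linearCombination]
  have hbound : ∃ C, ∀ l, ‖linearCombination 𝕜 w l‖ ≤ C * ‖linearCombination 𝕜 v l‖ :=
    ⟨1, fun l => by rw [hnorm, one_mul]⟩
  set T := (linearCombination 𝕜 w).extendOfNorm (linearCombination 𝕜 v)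
  have hT (l : ι →₀ 𝕜) : T (linearCombination 𝕜 v l) = linearCombination 𝕜 w l :=
    LinearMap.extendOfNorm_eq hdense hbound l
  have hTnorm (x : E) : ‖T x‖ = ‖x‖ :=
    hdense.induction (fun _ ⟨l, hl⟩ => by rw [← hl, hT, hnorm])
      (isClosed_eq (by fun_prop) continuous_norm) x
  exact ⟨⟨T.toLinearMap, hTnorm⟩, fun i => by simpa using hT (single i 1)⟩

end GramExtension

theorem LinearIsometry.surjective_of_dense_span_subset_range {𝕜 E E' : Type*} [RCLike 𝕜]
    [NormedAddCommGroup E] [InnerProductSpace 𝕜 E] [CompleteSpace E]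
    [NormedAddCommGroup E'] [InnerProductSpace 𝕜 E'] (T : E →ₗᵢ[𝕜] E') {s : Set E'}
    (hs : Dense (Submodule.span 𝕜 s : Set E')) (hsT : s ⊆ Set.range T) :
    Function.Surjective T := by
  have hclosed : IsClosed (LinearMap.range T.toLinearMap : Set E') :=
    (T.isometry.isUniformInducing.isComplete_range).isClosed
  have hspan : Submodule.span 𝕜 s ≤ LinearMap.range T.toLinearMap :=
    Submodule.span_le.2 hsT
  exact fun y => hclosed.closure_subset_iff.2 hspan (hs y)

section RKHS

variable {X H : Type*} [NormedAddCommGroup H] [InnerProductSpace ℂ H]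
  {toFun : H →ₗ[ℂ] (X → ℂ)} {K : X → H}

theorem dense_span_range_kernel [CompleteSpace H] (hinj : Function.Injective toFun)
    (hrep : ∀ (f : H) (x : X), toFun f x = inner ℂ (K x) f) :
    Dense (Submodule.span ℂ (Set.range K) : Set H) := by
  rw [Submodule.dense_iff_topologicalClosure_eq_top, Submodule.topologicalClosure_eq_top_iff,
    Submodule.eq_bot_iff]
  intro f hf
  refine hinj (funext fun x => ?_)
  rw [map_zero, hrep]
  exact hf (K x) (Submodule.subset_span ⟨x, rfl⟩)

theorem koopman_iff_symm_apply_kernel (hrep : ∀ (f : H) (x : X), toFun f x = inner ℂ (K x) f)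
    (F : X → X) (U : H ≃ₗᵢ[ℂ] H) :
    (∀ f : H, toFun (U f) = toFun f ∘ F) ↔ ∀ x, U.symm (K x) = K (F x) := by
  have hflip (f : H) (x : X) : toFun (U f) x = inner ℂ (U.symm (K x)) f := by
    rw [hrep, U.symm.inner_map_eq_flip, U.symm_symm]
  constructor
  · intro hU x
    refine ext_inner_right ℂ fun f => ?_
    rw [← hflip, hU, Function.comp_apply, hrep]
  · intro hU f
    funext x
    rw [hflip, hU, Function.comp_apply, hrep]

end RKHS

/-- Let `H` be an RKHS on `X` with kernel functions `K x`
(kernel `𝔎(x,y) = ⟪K x, K y⟫`) and `F : X → X`. If `F` is a bijection and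
`𝔎(F x, F y) = 𝔎(x, y)` for all `x, y`, then the Koopman operator `g ↦ g ∘ F` extends to a
unitary operator on `H`. Conversely, if the Koopman operator is unitary then
`𝔎(F x, F y) = 𝔎(x, y)` for all `x, y`. -/
theorem koopman_unitary_iff_kernel_invariant
    (X : Type*) (H : Type*) [NormedAddCommGroup H] [InnerProductSpace ℂ H] [CompleteSpace H]
    (toFun : H →ₗ[ℂ] (X → ℂ)) (hinj : Function.Injective toFun)
    (K : X → H)
    (hrep : ∀ (f : H) (x : X), toFun f x = (inner ℂ (K x) f : ℂ))
    (F : X → X) :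
    (Function.Bijective F →
      (∀ x y : X, (inner ℂ (K (F x)) (K (F y)) : ℂ) = inner ℂ (K x) (K y)) →
      ∃ U : H ≃ₗᵢ[ℂ] H, ∀ f : H, toFun (U f) = toFun f ∘ F) ∧
    (∀ U : H ≃ₗᵢ[ℂ] H, (∀ f : H, toFun (U f) = toFun f ∘ F) →
      ∀ x y : X, (inner ℂ (K (F x)) (K (F y)) : ℂ) = inner ℂ (K x) (K y)) := by
  have hdense := dense_span_range_kernel hinj hrep
  constructor
  · intro hF hK
    obtain ⟨V, hV⟩ := exists_linearIsometry_apply_eq_of_inner_eq (w := K ∘ F) hdense hK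
    have hsurj : Function.Surjective V :=
      V.surjective_of_dense_span_subset_range hdense fun _ ⟨y, hy⟩ => by
        obtain ⟨x, rfl⟩ := hF.2 y
        exact ⟨K x, hy ▸ hV x⟩
    refine ⟨(LinearIsometryEquiv.ofSurjective V hsurj).symm,
      (koopman_iff_symm_apply_kernel hrep F _).2 fun x => ?_⟩
    simpa using hV x
  · intro U hU x y
    have hUK := (koopman_iff_symm_apply_kernel hrep F U).1 hU
    rw [← hUK x, ← hUK y, LinearIsometryEquiv.inner_map_map]
end

section
/- Let H be an RKHS on X with kernel 𝔎 and F : X → X such that the Koopman operator K_F is bounded on H. Then K_F is self-adjoint if and only if 𝔎(x, F(y)) = 𝔎(F(x), y) for all x, y ∈ X. -/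
/-!
The adjoint of the Koopman operator always sends `K x` to `K (F x)`. Since the kernel functions
separate the points of `H`, `U = U†` holds exactly when `U` does the same, and testing
`U (K x) = K (F x)` against every `K y` is the kernel symmetry.
-/

open ContinuousLinearMap

section Koopman

variable {X H : Type*} [NormedAddCommGroup H] [InnerProductSpace ℂ H]
  {toFun : H →ₗ[ℂ] (X → ℂ)} {K : X → H}

theorem eq_iff_forall_inner_kernel_eq (hinj : Function.Injective toFun)
    (hrep : ∀ (f : H) (x : X), toFun f x = (inner ℂ (K x) f : ℂ)) {f g : H} :
    f = g ↔ ∀ x, (inner ℂ (K x) f : ℂ) = inner ℂ (K x) g := by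
  refine ⟨fun h x => h ▸ rfl, fun h => hinj (funext fun x => ?_)⟩
  rw [hrep, hrep, h]

variable {F : X → X} {U : H →L[ℂ] H}

theorem inner_kernel_koopman (hrep : ∀ (f : H) (x : X), toFun f x = (inner ℂ (K x) f : ℂ))
    (hU : ∀ f : H, toFun (U f) = toFun f ∘ F) (f : H) (x : X) :
    (inner ℂ (K x) (U f) : ℂ) = inner ℂ (K (F x)) f := by
  rw [← hrep, hU, Function.comp_apply, hrep]

variable [CompleteSpace H]

theorem adjoint_koopman_apply_kernel
    (hrep : ∀ (f : H) (x : X), toFun f x = (inner ℂ (K x) f : ℂ))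
    (hU : ∀ f : H, toFun (U f) = toFun f ∘ F) (x : X) :
    adjoint U (K x) = K (F x) :=
  ext_inner_right ℂ fun f => by
    rw [adjoint_inner_left, inner_kernel_koopman hrep hU]

theorem eq_of_adjoint_apply_kernel_eq (hinj : Function.Injective toFun)
    (hrep : ∀ (f : H) (x : X), toFun f x = (inner ℂ (K x) f : ℂ)) {A B : H →L[ℂ] H}
    (h : ∀ x, adjoint A (K x) = adjoint B (K x)) : A = B := by
  ext f
  rw [eq_iff_forall_inner_kernel_eq hinj hrep]
  intro x
  rw [← adjoint_inner_left, ← adjoint_inner_left, h]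

theorem koopman_isSelfAdjoint_iff_apply_kernel (hinj : Function.Injective toFun)
    (hrep : ∀ (f : H) (x : X), toFun f x = (inner ℂ (K x) f : ℂ))
    (hU : ∀ f : H, toFun (U f) = toFun f ∘ F) :
    IsSelfAdjoint U ↔ ∀ x, U (K x) = K (F x) := by
  rw [isSelfAdjoint_iff']
  constructor
  · intro hadj x
    rw [← adjoint_koopman_apply_kernel hrep hU x, hadj]
  · intro hUK
    refine eq_of_adjoint_apply_kernel_eq hinj hrep fun x => ?_
    rw [adjoint_adjoint, hUK, adjoint_koopman_apply_kernel hrep hU]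

end Koopman

/-- Let `H` be an RKHS on `X` with kernel functions `K x`
(kernel `𝔎(x,y) = ⟪K x, K y⟫`) and `F : X → X` such that the Koopman operator
`U g = g ∘ F` is bounded on `H`. Then `U` is self-adjoint if and only if
`𝔎(x, F y) = 𝔎(F x, y)` for all `x, y ∈ X`. -/
theorem koopman_selfAdjoint_iff_kernel_symmetry
    (X : Type*) (H : Type*) [NormedAddCommGroup H] [InnerProductSpace ℂ H] [CompleteSpace H]
    (toFun : H →ₗ[ℂ] (X → ℂ)) (hinj : Function.Injective toFun)
    (K : X → H)
    (hrep : ∀ (f : H) (x : X), toFun f x = (inner ℂ (K x) f : ℂ))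
    (F : X → X)
    (U : H →L[ℂ] H)
    (hU : ∀ f : H, toFun (U f) = toFun f ∘ F) :
    IsSelfAdjoint U ↔
      ∀ x y : X, (inner ℂ (K x) (K (F y)) : ℂ) = inner ℂ (K (F x)) (K y) := by
  rw [koopman_isSelfAdjoint_iff_apply_kernel hinj hrep hU, forall_comm]
  refine forall_congr' fun y => ?_
  rw [eq_iff_forall_inner_kernel_eq hinj hrep]
  refine forall_congr' fun x => ?_
  rw [inner_kernel_koopman hrep hU, eq_comm]
end

section
/- Let H be an RKHS on X with radial kernel 𝔎(x, y) = 𝔎₀(‖x − y‖) where 𝔎₀ is injective, and let F : X → X be a bijection such that the Koopman operator K_F is defined. Then K_F is unitary if and only if F is an isometry, i.e., ‖F(x) − F(y)‖ = ‖x − y‖ for all x, y ∈ X. -/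
/-!
A unitary `U` satisfies `toFun (U f) = toFun f ∘ F` exactly when it maps each kernel vector
`K (F x)` to `K x`. Injectivity of `toFun` makes the kernel vectors (and, `F` being surjective,
the vectors `K (F x)`) span dense subspaces, so such a `U` exists iff the two families have the
same Gram matrix: the map `∑ aₓ K (F x) ↦ ∑ aₓ K x` is then well defined and isometric, and
extends by continuity. For a radial kernel with injective profile `K₀`, equality of the Gram
matrices says precisely that `F` preserves distances.
-/

section

variable {𝕜 ι H₁ H₂ : Type*} [RCLike 𝕜]
  [NormedAddCommGroup H₁] [InnerProductSpace 𝕜 H₁]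
  [NormedAddCommGroup H₂] [InnerProductSpace 𝕜 H₂]

theorem denseRange_linearCombination_of_forall_inner_eq_zero [CompleteSpace H₁] {v : ι → H₁}
    (hv : ∀ f, (∀ i, inner 𝕜 (v i) f = 0) → f = 0) :
    DenseRange (Finsupp.linearCombination 𝕜 v) := by
  rw [DenseRange, ← LinearMap.coe_range, Finsupp.range_linearCombination,
    Submodule.dense_iff_topologicalClosure_eq_top, Submodule.topologicalClosure_eq_top_iff,
    Submodule.eq_bot_iff]
  exact fun f hf ↦ hv f fun i ↦ hf (v i) (Submodule.subset_span ⟨i, rfl⟩)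

theorem inner_linearCombination_eq_of_inner_eq_s6 {v : ι → H₁} {w : ι → H₂}
    (h : ∀ i j, inner 𝕜 (w i) (w j) = inner 𝕜 (v i) (v j)) (a b : ι →₀ 𝕜) :
    inner 𝕜 (Finsupp.linearCombination 𝕜 w a) (Finsupp.linearCombination 𝕜 w b) =
      inner 𝕜 (Finsupp.linearCombination 𝕜 v a) (Finsupp.linearCombination 𝕜 v b) := by
  simp only [Finsupp.linearCombination_apply, Finsupp.sum, sum_inner, inner_sum, inner_smul_left,
    inner_smul_right, h]

theorem norm_linearCombination_eq_of_inner_eq {v : ι → H₁} {w : ι → H₂}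
    (h : ∀ i j, inner 𝕜 (w i) (w j) = inner 𝕜 (v i) (v j)) (a : ι →₀ 𝕜) :
    ‖Finsupp.linearCombination 𝕜 w a‖ = ‖Finsupp.linearCombination 𝕜 v a‖ := by
  rw [norm_eq_sqrt_re_inner (𝕜 := 𝕜), norm_eq_sqrt_re_inner (𝕜 := 𝕜),
    inner_linearCombination_eq_of_inner_eq_s6 h]

theorem exists_linearIsometryEquiv_apply_eq_iff_inner_eq [CompleteSpace H₁] [CompleteSpace H₂]
    {v : ι → H₁} {w : ι → H₂} (hv : DenseRange (Finsupp.linearCombination 𝕜 v))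
    (hw : DenseRange (Finsupp.linearCombination 𝕜 w)) :
    (∃ U : H₁ ≃ₗᵢ[𝕜] H₂, ∀ i, U (v i) = w i) ↔
      ∀ i j, inner 𝕜 (w i) (w j) = inner 𝕜 (v i) (v j) := by
  refine ⟨fun ⟨U, hU⟩ i j ↦ by simp only [← hU, U.inner_map_map], fun h ↦ ?_⟩
  have hnorm := norm_linearCombination_eq_of_inner_eq h
  refine ⟨(LinearEquiv.refl 𝕜 (ι →₀ 𝕜)).extendOfIsometry _ _ hv hw hnorm, fun i ↦ ?_⟩
  simpa using LinearEquiv.extendOfIsometry_eq (LinearEquiv.refl 𝕜 (ι →₀ 𝕜)) _ _ hv hw hnorm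
    (Finsupp.single i 1)

theorem LinearIsometryEquiv.forall_inner_apply_eq_iff (U : H₁ ≃ₗᵢ[𝕜] H₂) (v : H₂) (w : H₁) :
    (∀ f, inner 𝕜 v (U f) = inner 𝕜 w f) ↔ U w = v := by
  have h f : inner 𝕜 v (U f) = inner 𝕜 (U.symm v) f := (U.symm.inner_map_eq_flip v f).symm
  simp only [h]
  rw [← ext_iff_inner_right, U.symm_apply_eq, eq_comm]

theorem forall_inner_comp_eq_iff_norm_sub_eq {E H : Type*} [SeminormedAddCommGroup E] {X : Set E}
    [NormedAddCommGroup H] [InnerProductSpace 𝕜 H] {K : X → H} {K₀ : ℝ → ℝ}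
    (hK₀ : ∀ a b : ℝ, 0 ≤ a → 0 ≤ b → K₀ a = K₀ b → a = b)
    (hK : ∀ x y : X, inner 𝕜 (K x) (K y) = (K₀ ‖(x : E) - (y : E)‖ : 𝕜)) (F : X → X) :
    (∀ x y, inner 𝕜 (K x) (K y) = inner 𝕜 (K (F x)) (K (F y))) ↔
      ∀ x y : X, ‖(F x : E) - (F y : E)‖ = ‖(x : E) - (y : E)‖ := by
  simp only [hK, RCLike.ofReal_inj]
  exact forall₂_congr fun x y ↦
    ⟨fun h ↦ hK₀ _ _ (norm_nonneg _) (norm_nonneg _) h.symm, fun h ↦ by rw [h]⟩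

end

/-- Let `X` be a subset of a normed space `E`, `H` an RKHS on `X` whose
kernel is radial, `𝔎(x,y) = 𝔎₀(‖x − y‖)` with `𝔎₀` injective on `[0,∞)`, and `F : X → X`
a bijection. Then the Koopman operator `g ↦ g ∘ F` is unitary if and only if `F` is an
isometry, i.e. `‖F x − F y‖ = ‖x − y‖` for all `x, y ∈ X`. -/
theorem koopman_unitary_iff_isometry_radial_kernel
    (E : Type*) [NormedAddCommGroup E] (X : Set E)
    (H : Type*) [NormedAddCommGroup H] [InnerProductSpace ℂ H] [CompleteSpace H]
    (toFun : H →ₗ[ℂ] (X → ℂ)) (hinj : Function.Injective toFun)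
    (K : X → H)
    (hrep : ∀ (f : H) (x : X), toFun f x = (inner ℂ (K x) f : ℂ))
    (K₀ : ℝ → ℝ)
    (hK₀inj : ∀ a b : ℝ, 0 ≤ a → 0 ≤ b → K₀ a = K₀ b → a = b)
    (hker : ∀ x y : X, (inner ℂ (K x) (K y) : ℂ) = (K₀ ‖(x : E) - (y : E)‖ : ℝ))
    (F : X → X) (hF : Function.Bijective F) :
    (∃ U : H ≃ₗᵢ[ℂ] H, ∀ f : H, toFun (U f) = toFun f ∘ F) ↔
      ∀ x y : X, ‖(F x : E) - (F y : E)‖ = ‖(x : E) - (y : E)‖ := by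
  have hK_total : ∀ f, (∀ x, inner ℂ (K x) f = 0) → f = 0 := fun f hf ↦
    hinj <| by ext x; simp [hrep, hf]
  have hKF_total : ∀ f, (∀ x, inner ℂ (K (F x)) f = 0) → f = 0 := fun f hf ↦
    hK_total f (hF.surjective.forall.mpr hf)
  have koopman_iff (U : H ≃ₗᵢ[ℂ] H) :
      (∀ f, toFun (U f) = toFun f ∘ F) ↔ ∀ x, U (K (F x)) = K x := by
    simp only [funext_iff, hrep, Function.comp_apply]
    rw [forall_comm]
    exact forall_congr' fun x ↦ U.forall_inner_apply_eq_iff _ _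
  simp only [koopman_iff]
  rw [exists_linearIsometryEquiv_apply_eq_iff_inner_eq
      (denseRange_linearCombination_of_forall_inner_eq_zero hKF_total)
      (denseRange_linearCombination_of_forall_inner_eq_zero hK_total)]
  exact forall_inner_comp_eq_iff_norm_sub_eq hK₀inj hker F
end

section
/- Let K* be a bounded operator on an RKHS H, x₀ ∈ X, and suppose {(λᵢ, ψᵢ)}_{i=1}^{m} satisfy ‖(K* − λᵢI)ψᵢ‖ ≤ ε for each i, and coefficients cᵢ ∈ ℂ satisfy ‖𝔎_{x₀} − Σᵢ cᵢψᵢ‖ ≤ δ. Then for any g ∈ H and n ∈ ℕ, |g(Fⁿ(x₀)) − Σᵢ c̄ᵢ λ̄ᵢⁿ ⟨g, ψᵢ⟩| ≤ ‖g‖ ( δ‖K*‖ⁿ + ε Σᵢ |cᵢ| Σ_{j=1}^{n} |λᵢ|^{n−j} ‖K*‖^{j−1} ). -/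
/-!
Writing `K x₀ = Σᵢ cᵢ ψᵢ + r` with `‖r‖ ≤ δ`, the value `g(Fⁿ x₀) = ⟪Aⁿ K x₀, g⟫` differs from
`Σᵢ c̄ᵢ λ̄ᵢⁿ ⟪ψᵢ, g⟫ = ⟪Σᵢ cᵢ λᵢⁿ ψᵢ, g⟫` by `⟪Aⁿ r + Σᵢ cᵢ (Aⁿ ψᵢ − λᵢⁿ ψᵢ), g⟫`. The first term
is at most `‖A‖ⁿ δ`, and each pseudoeigenvector drifts from its ideal evolution by at most
`ε Σ_{j=1}^n |λᵢ|^{n−j} ‖A‖^{j−1}`; Cauchy–Schwarz finishes the proof.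
-/

open Finset

namespace ContinuousLinearMap

variable {𝕜 E : Type*} [NontriviallyNormedField 𝕜] [NormedAddCommGroup E] [NormedSpace 𝕜 E]

theorem norm_pow_apply_le (A : E →L[𝕜] E) (n : ℕ) (w : E) : ‖(A ^ n) w‖ ≤ ‖A‖ ^ n * ‖w‖ := by
  rcases Nat.eq_zero_or_pos n with rfl | hn
  · simp
  · exact ((A ^ n).le_opNorm w).trans
      (mul_le_mul_of_nonneg_right (norm_pow_le' A hn) (norm_nonneg w))

theorem norm_pow_apply_sub_pow_smul_le {A : E →L[𝕜] E} {ψ : E} {lam : 𝕜} {ε : ℝ}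
    (h : ‖A ψ - lam • ψ‖ ≤ ε) (n : ℕ) :
    ‖(A ^ n) ψ - lam ^ n • ψ‖ ≤
      ε * ∑ j ∈ Icc 1 n, ‖lam‖ ^ (n - j) * ‖A‖ ^ (j - 1) := by
  induction n with
  | zero => simp
  | succ n ih =>
    have hsplit : (A ^ (n + 1)) ψ - lam ^ (n + 1) • ψ =
        (A ^ n) (A ψ - lam • ψ) + lam • ((A ^ n) ψ - lam ^ n • ψ) := by
      rw [pow_succ, mul_apply_eq_comp, map_sub, map_smul, smul_sub, smul_smul, ← pow_succ']
      abel
    have hsum : ∑ j ∈ Icc 1 (n + 1), ‖lam‖ ^ (n + 1 - j) * ‖A‖ ^ (j - 1) =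
        ‖A‖ ^ n + ‖lam‖ * ∑ j ∈ Icc 1 n, ‖lam‖ ^ (n - j) * ‖A‖ ^ (j - 1) := by
      rw [sum_Icc_succ_top (by omega), mul_sum, add_comm]
      congr 1
      · simp
      · refine sum_congr rfl fun j hj => ?_
        rw [show n + 1 - j = n - j + 1 by grind, pow_succ]
        ring
    calc ‖(A ^ (n + 1)) ψ - lam ^ (n + 1) • ψ‖
        ≤ ‖(A ^ n) (A ψ - lam • ψ)‖ + ‖lam • ((A ^ n) ψ - lam ^ n • ψ)‖ := by
          rw [hsplit]; exact norm_add_le _ _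
      _ ≤ ‖A‖ ^ n * ε + ‖lam‖ * (ε * ∑ j ∈ Icc 1 n, ‖lam‖ ^ (n - j) * ‖A‖ ^ (j - 1)) := by
          rw [norm_smul]
          gcongr
          exact (norm_pow_apply_le A n _).trans (by gcongr)
      _ = ε * ∑ j ∈ Icc 1 (n + 1), ‖lam‖ ^ (n + 1 - j) * ‖A‖ ^ (j - 1) := by
          rw [hsum]; ring

theorem norm_pow_apply_sub_sum_pow_smul_le {ι : Type*} [Fintype ι] {A : E →L[𝕜] E}
    {lam : ι → 𝕜} {ψ : ι → E} {ε δ : ℝ} (hψ : ∀ i, ‖A (ψ i) - lam i • ψ i‖ ≤ ε)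
    {c : ι → 𝕜} {v : E} (hc : ‖v - ∑ i, c i • ψ i‖ ≤ δ) (n : ℕ) :
    ‖(A ^ n) v - ∑ i, (c i * lam i ^ n) • ψ i‖ ≤
      δ * ‖A‖ ^ n + ε * ∑ i, ‖c i‖ * ∑ j ∈ Icc 1 n, ‖lam i‖ ^ (n - j) * ‖A‖ ^ (j - 1) := by
  have hsplit : (A ^ n) v - ∑ i, (c i * lam i ^ n) • ψ i =
      (A ^ n) (v - ∑ i, c i • ψ i) + ∑ i, c i • ((A ^ n) (ψ i) - lam i ^ n • ψ i) := by
    simp only [map_sub, map_sum, map_smul, smul_sub, smul_smul, sum_sub_distrib]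
    abel
  have hmodes : ‖∑ i, c i • ((A ^ n) (ψ i) - lam i ^ n • ψ i)‖ ≤
      ε * ∑ i, ‖c i‖ * ∑ j ∈ Icc 1 n, ‖lam i‖ ^ (n - j) * ‖A‖ ^ (j - 1) := by
    rw [mul_sum]
    refine (norm_sum_le _ _).trans (sum_le_sum fun i _ => ?_)
    rw [norm_smul, mul_left_comm]
    exact mul_le_mul_of_nonneg_left (norm_pow_apply_sub_pow_smul_le (hψ i) n) (norm_nonneg _)
  have hrem : ‖(A ^ n) (v - ∑ i, c i • ψ i)‖ ≤ δ * ‖A‖ ^ n :=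
    (norm_pow_apply_le A n _).trans (by rw [mul_comm]; gcongr)
  rw [hsplit]
  exact (norm_add_le _ _).trans (add_le_add hrem hmodes)

end ContinuousLinearMap

theorem perronFrobenius_mode_decomposition_error_general
    (X : Type*) (H : Type*) [NormedAddCommGroup H] [InnerProductSpace ℂ H]
    (toFun : H →ₗ[ℂ] (X → ℂ))
    (K : X → H)
    (hrep : ∀ (f : H) (x : X), toFun f x = (inner ℂ (K x) f : ℂ))
    (F : X → X)
    (A : H →L[ℂ] H)
    (hA : ∀ x : X, A (K x) = K (F x))
    (m : ℕ) (lam : Fin m → ℂ) (ψ : Fin m → H) (ε δ : ℝ)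
    (hψ : ∀ i, ‖A (ψ i) - lam i • ψ i‖ ≤ ε)
    (c : Fin m → ℂ) (x₀ : X)
    (hc : ‖K x₀ - ∑ i, c i • ψ i‖ ≤ δ) :
    ∀ (g : H) (n : ℕ),
      ‖toFun g (F^[n] x₀) -
          ∑ i, (starRingEnd ℂ) (c i) * ((starRingEnd ℂ) (lam i)) ^ n *
            (inner ℂ (ψ i) g : ℂ)‖ ≤
        ‖g‖ * (δ * ‖A‖ ^ n +
          ε * ∑ i, ‖c i‖ *
            ∑ j ∈ Finset.Icc 1 n, ‖lam i‖ ^ (n - j) * ‖A‖ ^ (j - 1)) := by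
  intro g n
  have horbit : K (F^[n] x₀) = (A ^ n) (K x₀) := by
    rw [FunLike.coe_pow_eq_iterate]
    exact (Function.Semiconj.iterate_right (fun x => (hA x).symm) n) x₀
  have hinner : toFun g (F^[n] x₀) -
      ∑ i, (starRingEnd ℂ) (c i) * (starRingEnd ℂ) (lam i) ^ n * inner ℂ (ψ i) g =
      inner ℂ ((A ^ n) (K x₀) - ∑ i, (c i * lam i ^ n) • ψ i) g := by
    simp only [hrep, horbit, inner_sub_left, sum_inner, inner_smul_left, map_mul, map_pow]
  rw [hinner, mul_comm]
  exact (norm_inner_le_norm _ _).trans <| mul_le_mul_of_nonneg_right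
    (ContinuousLinearMap.norm_pow_apply_sub_sum_pow_smul_le hψ hc n) (norm_nonneg g)

/-- Let `H` be an RKHS on `X` with kernel functions `K x`, `F : X → X`,
and let `A` be the bounded Perron–Frobenius operator (`A (K x) = K (F x)`, the adjoint of
the Koopman operator). Suppose `‖(A − λᵢ)ψᵢ‖ ≤ ε` for `i = 1, …, m` and
`‖K x₀ − Σᵢ cᵢ ψᵢ‖ ≤ δ`. Then for any `g ∈ H` and `n ∈ ℕ`,
`|g(Fⁿ x₀) − Σᵢ c̄ᵢ λ̄ᵢⁿ ⟨g, ψᵢ⟩| ≤ ‖g‖ (δ ‖A‖ⁿ + ε Σᵢ |cᵢ| Σ_{j=1}^n |λᵢ|^{n−j} ‖A‖^{j−1})`. -/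
theorem perronFrobenius_mode_decomposition_error
    (X : Type*) (H : Type*) [NormedAddCommGroup H] [InnerProductSpace ℂ H] [CompleteSpace H]
    (toFun : H →ₗ[ℂ] (X → ℂ))
    (K : X → H)
    (hrep : ∀ (f : H) (x : X), toFun f x = (inner ℂ (K x) f : ℂ))
    (F : X → X)
    (A : H →L[ℂ] H)
    (hA : ∀ x : X, A (K x) = K (F x))
    (m : ℕ) (lam : Fin m → ℂ) (ψ : Fin m → H) (ε δ : ℝ)
    (hψ : ∀ i, ‖A (ψ i) - lam i • ψ i‖ ≤ ε)
    (c : Fin m → ℂ) (x₀ : X)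
    (hc : ‖K x₀ - ∑ i, c i • ψ i‖ ≤ δ) :
    ∀ (g : H) (n : ℕ),
      ‖toFun g (F^[n] x₀) -
          ∑ i, (starRingEnd ℂ) (c i) * ((starRingEnd ℂ) (lam i)) ^ n *
            (inner ℂ (ψ i) g : ℂ)‖ ≤
        ‖g‖ * (δ * ‖A‖ ^ n +
          ε * ∑ i, ‖c i‖ *
            ∑ j ∈ Finset.Icc 1 n, ‖lam i‖ ^ (n - j) * ‖A‖ ^ (j - 1)) :=
  perronFrobenius_mode_decomposition_error_general X H toFun K hrep F A hA m lam ψ ε δ hψ c x₀ hc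
end

section
/- Let G, G̃ ∈ ℂ^{n×n} be self-adjoint matrices with eigenvalues λ₁ ≤ ⋯ ≤ λₙ and λ̃₁ ≤ ⋯ ≤ λ̃ₙ respectively (counted with multiplicity). Then |λᵢ − λ̃ᵢ| ≤ ‖G − G̃‖₂ for every i, where ‖·‖₂ is the spectral norm. -/
/-!
Courant–Fischer argument. Let `ε = ‖G - G'‖`. The eigenvectors of `G` with eigenvalue at least
`μ i` span a space of dimension at least `n - i`, and those of `G'` with eigenvalue at most
`μ' i` span one of dimension at least `i + 1`, so the two spaces share a nonzero vector `x`.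
The Rayleigh quotient of `G` at `x` is at least `μ i`, that of `G'` at most `μ' i`, and they
differ by the Rayleigh quotient of `G - G'`, which is at most `ε`. Hence `μ i ≤ μ' i + ε`, and
the other inequality follows by symmetry.
-/

open Module Finset Submodule ContinuousLinearMap

lemma Submodule.exists_mem_inf_ne_zero_of_finrank_lt {K V : Type*} [DivisionRing K]
    [AddCommGroup V] [Module K V] [FiniteDimensional K V] (s t : Submodule K V)
    (h : finrank K V < finrank K s + finrank K t) : ∃ x ∈ s ⊓ t, x ≠ 0 := by
  refine (s ⊓ t).ne_bot_iff.1 fun hbot => h.not_ge ?_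
  rw [← finrank_sup_add_finrank_inf_eq, hbot, finrank_bot, add_zero]
  exact finrank_le _

lemma Finset.card_filter_comp_eq_of_map_univ_eq {ι α : Type*} [Fintype ι] {f g : ι → α}
    (h : univ.val.map f = univ.val.map g) (p : α → Prop) [DecidablePred p] :
    #{i | p (f i)} = #{i | p (g i)} := by
  simpa [Finset.card, Finset.filter_val, ← Multiset.countP_eq_card_filter, Multiset.countP_map]
    using congrArg (Multiset.countP p) h

namespace OrthonormalBasis

variable {𝕜 E ι : Type*} [RCLike 𝕜] [NormedAddCommGroup E] [InnerProductSpace 𝕜 E] [Fintype ι]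
  (b : OrthonormalBasis ι 𝕜 E) {T : E →L[𝕜] E} {μ : ι → ℝ}

lemma repr_eq_zero_of_mem_span {S : Set ι} {x : E} (hx : x ∈ span 𝕜 (b '' S)) {k : ι}
    (hk : k ∉ S) : b.repr x k = 0 := by
  rw [← b.coe_toBasis_repr_apply]
  exact Finsupp.notMem_support_iff.1 fun hk' =>
    hk (b.toBasis.repr_support_subset_of_mem_span S (by rwa [b.coe_toBasis]) hk')

lemma sq_norm_eq_sum_sq_norm_repr (x : E) : ‖x‖ ^ 2 = ∑ k, ‖b.repr x k‖ ^ 2 := by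
  simp_rw [b.repr_apply_apply, b.sum_sq_norm_inner_right]

lemma repr_apply_of_apply_eq_smul (hT : ∀ k, T (b k) = (μ k : 𝕜) • b k) (x : E) (k : ι) :
    b.repr (T x) k = μ k * b.repr x k := by
  classical
  conv_lhs => rw [← b.sum_repr x]
  simp [hT, b.repr_self, Pi.single_apply, RCLike.real_smul_eq_coe_mul, mul_comm]

lemma re_inner_apply_self_eq_sum (hT : ∀ k, T (b k) = (μ k : 𝕜) • b k) (x : E) :
    RCLike.re (inner 𝕜 (T x) x) = ∑ k, μ k * ‖b.repr x k‖ ^ 2 := by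
  rw [← b.repr.inner_map_map, PiLp.inner_apply, map_sum]
  refine sum_congr rfl fun k _ => ?_
  rw [b.repr_apply_of_apply_eq_smul hT, RCLike.inner_apply, map_mul (starRingEnd 𝕜),
    RCLike.conj_ofReal, mul_left_comm, RCLike.mul_conj, ← RCLike.ofReal_pow, RCLike.re_ofReal_mul,
    RCLike.ofReal_re]

lemma le_rayleighQuotient_of_mem_span (hT : ∀ k, T (b k) = (μ k : 𝕜) • b k) {S : Set ι} {c : ℝ}
    (hc : ∀ k ∈ S, c ≤ μ k) {x : E} (hx : x ∈ span 𝕜 (b '' S)) (hx0 : x ≠ 0) :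
    c ≤ T.rayleighQuotient x := by
  rw [rayleighQuotient, le_div_iff₀ (by positivity), reApplyInnerSelf_apply,
    b.re_inner_apply_self_eq_sum hT, b.sq_norm_eq_sum_sq_norm_repr, mul_sum]
  refine sum_le_sum fun k _ => ?_
  by_cases hk : k ∈ S
  · exact mul_le_mul_of_nonneg_right (hc k hk) (by positivity)
  · simp [b.repr_eq_zero_of_mem_span hx hk]

lemma rayleighQuotient_le_of_mem_span (hT : ∀ k, T (b k) = (μ k : 𝕜) • b k) {S : Set ι} {c : ℝ}
    (hc : ∀ k ∈ S, μ k ≤ c) {x : E} (hx : x ∈ span 𝕜 (b '' S)) (hx0 : x ≠ 0) :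
    T.rayleighQuotient x ≤ c := by
  have := b.le_rayleighQuotient_of_mem_span (T := -T) (μ := -μ) (by simp [hT])
    (fun k hk => neg_le_neg (hc k hk)) hx hx0
  rw [rayleighQuotient_neg_apply] at this
  linarith

lemma finrank_span_image (S : Finset ι) : finrank 𝕜 (span 𝕜 (b '' S)) = #S := by
  rw [Set.image_eq_range, ← Fintype.card_coe]
  exact finrank_span_eq_card (b.orthonormal.linearIndependent.comp _ Subtype.val_injective)

end OrthonormalBasis

theorem ContinuousLinearMap.le_add_norm_sub_of_finrank_lt {𝕜 E ι ι' : Type*} [RCLike 𝕜]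
    [NormedAddCommGroup E] [InnerProductSpace 𝕜 E] [Fintype ι] [Fintype ι']
    {T T' : E →L[𝕜] E} {b : OrthonormalBasis ι 𝕜 E} {b' : OrthonormalBasis ι' 𝕜 E}
    {μ : ι → ℝ} {μ' : ι' → ℝ} (hT : ∀ k, T (b k) = (μ k : 𝕜) • b k)
    (hT' : ∀ k, T' (b' k) = (μ' k : 𝕜) • b' k) {a a' : ℝ}
    (h : finrank 𝕜 E < #{k | a ≤ μ k} + #{k | μ' k ≤ a'}) : a ≤ a' + ‖T - T'‖ := by
  have := b.toBasis.finiteDimensional_of_finite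
  obtain ⟨x, ⟨hxV, hxW⟩, hx0⟩ := exists_mem_inf_ne_zero_of_finrank_lt
    (span 𝕜 (b '' ↑({k | a ≤ μ k} : Finset ι))) (span 𝕜 (b' '' ↑({k | μ' k ≤ a'} : Finset ι')))
    (by rwa [b.finrank_span_image, b'.finrank_span_image])
  calc a ≤ T.rayleighQuotient x := b.le_rayleighQuotient_of_mem_span hT (by simp) hxV hx0
    _ = T'.rayleighQuotient x + (T - T').rayleighQuotient x := by
      rw [← rayleighQuotient_add, add_sub_cancel]
    _ ≤ a' + ‖T - T'‖ := add_le_add (b'.rayleighQuotient_le_of_mem_span hT' (by simp) hxW hx0)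
      ((le_abs_self _).trans (rayleighQuotient_le_norm _ _))

lemma Matrix.IsHermitian.toEuclideanCLM_eigenvectorBasis {𝕜 n : Type*} [RCLike 𝕜] [Fintype n]
    [DecidableEq n] {A : Matrix n n 𝕜} (hA : A.IsHermitian) (k : n) :
    Matrix.toEuclideanCLM (𝕜 := 𝕜) A (hA.eigenvectorBasis k) =
      (hA.eigenvalues k : 𝕜) • hA.eigenvectorBasis k := by
  ext j
  simpa [RCLike.real_smul_eq_coe_mul] using congrFun (hA.mulVec_eigenvectorBasis k) j

theorem Matrix.IsHermitian.le_add_norm_toEuclideanCLM_sub {𝕜 : Type*} [RCLike 𝕜] {n : ℕ}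
    {G G' : Matrix (Fin n) (Fin n) 𝕜} (hG : G.IsHermitian) (hG' : G'.IsHermitian)
    {μ μ' : Fin n → ℝ} (hμmono : Monotone μ) (hμ'mono : Monotone μ')
    (hμ : univ.val.map μ = univ.val.map hG.eigenvalues)
    (hμ' : univ.val.map μ' = univ.val.map hG'.eigenvalues) (i : Fin n) :
    μ i ≤ μ' i + ‖Matrix.toEuclideanCLM (𝕜 := 𝕜) (G - G')‖ := by
  rw [map_sub]
  refine le_add_norm_sub_of_finrank_lt hG.toEuclideanCLM_eigenvectorBasis
    hG'.toEuclideanCLM_eigenvectorBasis ?_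
  rw [finrank_euclideanSpace_fin, ← card_filter_comp_eq_of_map_univ_eq hμ (μ i ≤ ·),
    ← card_filter_comp_eq_of_map_univ_eq hμ' (· ≤ μ' i)]
  have hge : n - i ≤ #{j | μ i ≤ μ j} := (Fin.card_Ici i).symm.trans_le
    (card_le_card fun j hj => by simpa using hμmono (mem_Ici.1 hj))
  have hle : i + 1 ≤ #{j | μ' j ≤ μ' i} := (Fin.card_Iic i).symm.trans_le
    (card_le_card fun j hj => by simpa using hμ'mono (mem_Iic.1 hj))
  omega

/-- **Weyl's perturbation inequality.** Let `G, G'` be self-adjoint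
`n × n` complex matrices with eigenvalues `μ₁ ≤ ⋯ ≤ μₙ` and `μ'₁ ≤ ⋯ ≤ μ'ₙ`
(counted with multiplicity). Then `|μᵢ − μ'ᵢ| ≤ ‖G − G'‖₂` for every `i`, where
`‖·‖₂` is the spectral (operator) norm. -/
theorem weyl_eigenvalue_perturbation
    (n : ℕ) (G G' : Matrix (Fin n) (Fin n) ℂ)
    (hG : G.IsHermitian) (hG' : G'.IsHermitian)
    (μ μ' : Fin n → ℝ) (hμmono : Monotone μ) (hμ'mono : Monotone μ')
    (hμ : Multiset.map μ Finset.univ.val = Multiset.map hG.eigenvalues Finset.univ.val)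
    (hμ' : Multiset.map μ' Finset.univ.val = Multiset.map hG'.eigenvalues Finset.univ.val) :
    ∀ i : Fin n, |μ i - μ' i| ≤ ‖Matrix.toEuclideanCLM (𝕜 := ℂ) (G - G')‖ := by
  intro i
  have hle := hG.le_add_norm_toEuclideanCLM_sub hG' hμmono hμ'mono hμ hμ' i
  have hge := hG'.le_add_norm_toEuclideanCLM_sub hG hμ'mono hμmono hμ' hμ i
  rw [← norm_neg, ← map_neg, neg_sub] at hge
  exact abs_sub_le_iff.2 ⟨by linarith, by linarith⟩
end

section
/- Let F : (−1, 0) → (−1, 0) be the Gauss iterated map F(x) = exp(−2x²) − 1 − exp(−2). Then the Koopman operator g ↦ g ∘ F is unbounded on L²((−1,0)): for every M > 0 there exists g ∈ L²((−1,0)) with ‖g‖_{L²} = 1 and ‖g ∘ F‖_{L²} > M. -/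
/-! The Gauss map has a nondegenerate critical point at `0`: `|F x - F 0| ≤ 2 x²`. So for the
tent `f` of half-width `s²` centred at `F 0`, `(f ∘ F)² ≥ 1/4` on an interval of length `s / 2`,
while `∫ f² ≤ 2 s²`. The ratio `∫ (f ∘ F)² / ∫ f² ≥ 1 / (16 s)` is unbounded as `s → 0`, and
normalising `f` gives the required `g`. -/

open MeasureTheory Set Real

lemma exists_continuous_integral_sq_eq_one_lt_sqrt {X : Type*} [TopologicalSpace X]
    [MeasurableSpace X] {μ : Measure X} {F : X → X} {f : X → ℝ} {M : ℝ} (hM : 0 ≤ M)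
    (hf : Continuous f) (hpos : 0 < ∫ x, f x ^ 2 ∂μ)
    (hlt : M ^ 2 * ∫ x, f x ^ 2 ∂μ < ∫ x, f (F x) ^ 2 ∂μ) :
    ∃ g : X → ℝ, Continuous g ∧ (∫ x, g x ^ 2 ∂μ) = 1 ∧ M < √(∫ x, g (F x) ^ 2 ∂μ) := by
  set c := (√(∫ x, f x ^ 2 ∂μ))⁻¹
  have hc : c ^ 2 = (∫ x, f x ^ 2 ∂μ)⁻¹ := by rw [inv_pow, sq_sqrt hpos.le]
  have hscale : ∀ h : X → ℝ, ∫ x, (c * h x) ^ 2 ∂μ = c ^ 2 * ∫ x, h x ^ 2 ∂μ := fun h => by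
    simp_rw [mul_pow]; exact integral_const_mul _ _
  refine ⟨fun x => c * f x, continuous_const.mul hf, ?_, ?_⟩
  · rw [hscale, hc, inv_mul_cancel₀ hpos.ne']
  · rw [hscale fun x => f (F x), hc, lt_sqrt hM, inv_mul_eq_div, lt_div_iff₀ hpos]
    exact hlt

lemma mul_sub_le_setIntegral_of_le_on {f : ℝ → ℝ} {S : Set ℝ} {a b c : ℝ} (hab : a ≤ b)
    (hsub : Ioo a b ⊆ S) (hf : IntegrableOn f S) (hf0 : 0 ≤ f)
    (hc : ∀ x ∈ Ioo a b, c ≤ f x) : c * (b - a) ≤ ∫ x in S, f x :=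
  calc c * (b - a) = c * volume.real (Ioo a b) := by rw [volume_real_Ioo_of_le hab]
    _ ≤ ∫ x in Ioo a b, f x :=
      setIntegral_ge_of_const_le_real measurableSet_Ioo measure_Ioo_lt_top.ne hc (hf.mono_set hsub)
    _ ≤ ∫ x in S, f x := setIntegral_mono_set hf (.of_forall hf0) hsub.eventuallyLE

noncomputable def tent (c r u : ℝ) : ℝ := max 0 (1 - |u - c| / r)

section tent

variable {c r : ℝ}

@[fun_prop]
lemma continuous_tent : Continuous (tent c r) := by unfold tent; fun_prop

lemma one_quarter_le_tent_sq (hr : 0 < r) {u : ℝ} (hu : |u - c| ≤ r / 2) :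
    1 / 4 ≤ tent c r u ^ 2 := by
  have : |u - c| / r ≤ 1 / 2 := by rw [div_le_iff₀ hr]; linarith
  have : 1 / 2 ≤ tent c r u := le_max_of_le_right (by linarith)
  nlinarith

lemma tent_sq_le_indicator (hr : 0 < r) (u : ℝ) :
    tent c r u ^ 2 ≤ (Icc (c - r) (c + r)).indicator 1 u := by
  have h0 : 0 ≤ |u - c| / r := by positivity
  by_cases hu : u ∈ Icc (c - r) (c + r)
  · rw [indicator_of_mem hu, Pi.one_apply, tent, sq_le_one_iff₀ (le_max_left _ _)]
    exact max_le zero_le_one (by linarith)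
  · have : r ≤ |u - c| := by
      rw [mem_Icc, not_and_or, not_le, not_le] at hu
      rcases hu with hu | hu
      · rw [abs_of_neg (by linarith)]; linarith
      · rw [abs_of_pos (by linarith)]; linarith
    have : 1 ≤ |u - c| / r := (one_le_div hr).2 this
    rw [indicator_of_notMem hu, tent, max_eq_left (by linarith)]
    norm_num

lemma integrable_indicator_Icc_one : Integrable ((Icc (c - r) (c + r)).indicator (1 : ℝ → ℝ)) :=
  (integrable_indicator_iff measurableSet_Icc).2 (integrableOn_const measure_Icc_lt_top.ne)

lemma integrable_tent_sq (hr : 0 < r) : Integrable fun u => tent c r u ^ 2 :=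
  integrable_indicator_Icc_one.mono' (continuous_tent.pow 2).aestronglyMeasurable
    (.of_forall fun u => (Real.norm_of_nonneg (sq_nonneg _)).trans_le (tent_sq_le_indicator hr u))

lemma setIntegral_tent_sq_le (hr : 0 < r) (S : Set ℝ) : ∫ x in S, tent c r x ^ 2 ≤ 2 * r :=
  calc ∫ x in S, tent c r x ^ 2 ≤ ∫ x, tent c r x ^ 2 :=
        setIntegral_le_integral (integrable_tent_sq hr) (.of_forall fun _ => sq_nonneg _)
    _ ≤ ∫ x, (Icc (c - r) (c + r)).indicator 1 x :=
        integral_mono (integrable_tent_sq hr) integrable_indicator_Icc_one (tent_sq_le_indicator hr)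
    _ = 2 * r := by
        rw [integral_indicator_one measurableSet_Icc, volume_real_Icc_of_le (by linarith)]
        ring

lemma le_setIntegral_tent_sq (hr : 0 < r) {S : Set ℝ}
    (hS : Ioo (c - r / 2) (c + r / 2) ⊆ S) : r / 4 ≤ ∫ x in S, tent c r x ^ 2 := by
  have := mul_sub_le_setIntegral_of_le_on (a := c - r / 2) (b := c + r / 2) (by linarith) hS
    (integrable_tent_sq hr).integrableOn
    (fun _ => sq_nonneg _) fun x hx => one_quarter_le_tent_sq (c := c) hr
      (abs_sub_le_iff.2 ⟨by linarith [hx.2], by linarith [hx.1]⟩)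
  linarith

lemma le_setIntegral_tent_sq_comp {F : ℝ → ℝ} {s : ℝ} (hs : 0 < s) (hs2 : s ≤ 2)
    (hFc : Continuous F) (hquad : ∀ x, |F x - c| ≤ 2 * x ^ 2) :
    s / 8 ≤ ∫ x in Ioo (-1) 0, tent c (s ^ 2) (F x) ^ 2 := by
  have hint : IntegrableOn (fun x => tent c (s ^ 2) (F x) ^ 2) (Ioo (-1) 0) :=
    (Continuous.integrableOn_Icc (by fun_prop)).mono_set Ioo_subset_Icc_self
  have := mul_sub_le_setIntegral_of_le_on (a := -(s / 2)) (b := 0) (by linarith)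
    (Ioo_subset_Ioo (by linarith) le_rfl)
    hint (fun _ => sq_nonneg _) fun x hx => one_quarter_le_tent_sq (by positivity)
      ((hquad x).trans (by nlinarith [hx.1, hx.2]))
  linarith

end tent

lemma abs_exp_neg_two_mul_sq_sub_one_le (x : ℝ) : |exp (-2 * x ^ 2) - 1| ≤ 2 * x ^ 2 := by
  have hle : exp (-2 * x ^ 2) ≤ 1 := exp_le_one_iff.2 (by nlinarith [sq_nonneg x])
  have hge : -2 * x ^ 2 + 1 ≤ exp (-2 * x ^ 2) := add_one_le_exp _
  rw [abs_of_nonpos (by linarith)]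
  linarith

lemma exp_neg_two_mem_Ioo : exp (-2) ∈ Ioo (1 / 8) (1 / 2) := by
  have h : exp (-2) = exp (-1) ^ 2 := by rw [← exp_nat_mul]; norm_num
  have := exp_neg_one_gt_d9
  have := exp_neg_one_lt_d9
  constructor <;> nlinarith

/-- Let `F : (−1,0) → (−1,0)` be the Gauss iterated map
`F(x) = exp(−2x²) − 1 − exp(−2)`. Then the Koopman operator `g ↦ g ∘ F` is unbounded on
`L²((−1,0))`: for every `M > 0` there exists `g` with `‖g‖_{L²} = 1` and
`‖g ∘ F‖_{L²} > M`. -/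
theorem gauss_map_koopman_unbounded_on_L2
    (F : ℝ → ℝ)
    (hF : ∀ x : ℝ, F x = Real.exp (-2 * x ^ 2) - 1 - Real.exp (-2)) :
    ∀ M : ℝ, 0 < M → ∃ g : ℝ → ℝ, Continuous g ∧
      (∫ x in Set.Ioo (-1 : ℝ) 0, (g x) ^ 2) = 1 ∧
      M < Real.sqrt (∫ x in Set.Ioo (-1 : ℝ) 0, (g (F x)) ^ 2) := by
  intro M hM
  set s := min (1 / 4) (1 / (32 * M ^ 2))
  have hs : 0 < s := lt_min (by norm_num) (by positivity)
  have hs4 : s ≤ 1 / 4 := min_le_left _ _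
  have hsM : 32 * M ^ 2 * s ≤ 1 := by
    rw [← le_div_iff₀' (by positivity)]; exact min_le_right _ _
  have hFc : Continuous F := by rw [funext hF]; fun_prop
  have hquad : ∀ x, |F x - -exp (-2)| ≤ 2 * x ^ 2 := fun x => by
    rw [hF, sub_neg_eq_add, sub_add_cancel]; exact abs_exp_neg_two_mul_sq_sub_one_le x
  obtain ⟨he₁, he₂⟩ := exp_neg_two_mem_Ioo
  have hsupp : Ioo (-exp (-2) - s ^ 2 / 2) (-exp (-2) + s ^ 2 / 2) ⊆ Ioo (-1) 0 :=
    Ioo_subset_Ioo (by nlinarith) (by nlinarith)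
  have hI₁ := le_setIntegral_tent_sq (by positivity) hsupp
  have hI₂ := setIntegral_tent_sq_le (c := -exp (-2)) (by positivity : 0 < s ^ 2) (Ioo (-1) 0)
  have hJ := le_setIntegral_tent_sq_comp hs (by linarith) hFc hquad
  refine exists_continuous_integral_sq_eq_one_lt_sqrt hM.le continuous_tent
    (by linarith [pow_pos hs 2]) ?_
  nlinarith [mul_le_mul_of_nonneg_left hI₂ (sq_nonneg M)]
end
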